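/- Let K_* be an extended N-series acting on a filtered vector space W_* (i.e., there is a group homomorphism K_0 → Aut(W_*) of filtration-preserving automorphisms with [g, W_k] ⊆ W_{k+n} for g ∈ K_n, where [g,w] = g(w) − w). Then the induced map ρ_+ on associated graded objects, sending gK_{n+1} ∈ K_n/K_{n+1} to the map W_k/W_{k+1} → W_{k+n}/W_{k+n+1}, [v] ↦ [[g,v]], satisfies ρ_+([gK_{n+1}, hK_{n'+1}]) = [ρ_+(gK_{n+1}), ρ_+(hK_{n'+1})], where the left bracket is induced by the group commutator and the right bracket is the commutator of linear maps. -/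

import Mathlib

/-!
For the commutator `c = g h g⁻¹ h⁻¹` one has `c (h g) = g h`, which turns the difference exactly
into `−[c, [h g, v]]`. As `n, n' ≥ 1`, the vector `[h g, v]` lies in `W_{k+1}`, and `c ∈ K_{n+n'}`
moves it into `W_{k+1+n+n'}`.
-/

def gbr {K M G : Type*} [Field K] [AddCommGroup M] [Module K M] [Group G]
    (ρ : G →* (M ≃ₗ[K] M)) (g : G) (v : M) : M :=
  ρ g v - v

section

variable {K M G : Type*} [Field K] [AddCommGroup M] [Module K M] [Group G]
  (ρ : G →* (M ≃ₗ[K] M))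

theorem gbr_mul (a b : G) (v : M) :
    gbr ρ (a * b) v = gbr ρ a (gbr ρ b v) + gbr ρ a v + gbr ρ b v := by
  simp only [gbr, map_mul, LinearEquiv.mul_apply, map_sub]
  abel

theorem gbr_mul_mem {S : Submodule K M} {a b : G} {v : M}
    (ha : ∀ x ∈ S, gbr ρ a x ∈ S) (hav : gbr ρ a v ∈ S) (hbv : gbr ρ b v ∈ S) :
    gbr ρ (a * b) v ∈ S := by
  rw [gbr_mul]
  exact add_mem (add_mem (ha _ hbv) hav) hbv

theorem gbr_commutator_sub_eq (g h : G) (v : M) :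
    gbr ρ (g * h * g⁻¹ * h⁻¹) v - (gbr ρ g (gbr ρ h v) - gbr ρ h (gbr ρ g v)) =
      -gbr ρ (g * h * g⁻¹ * h⁻¹) (gbr ρ (h * g) v) := by
  have hc : ρ (g * h * g⁻¹ * h⁻¹) (ρ (h * g) v) = ρ (g * h) v := by
    rw [← LinearEquiv.mul_apply, ← map_mul]
    group
  simp only [gbr, map_sub, hc]
  simp only [map_mul, LinearEquiv.mul_apply]
  abel

end

theorem stmt7_general {K M G : Type*} [Field K] [AddCommGroup M] [Module K M] [Group G]
    (ρ : G →* (M ≃ₗ[K] M))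
    (Kf : ℕ → Subgroup G)
    (hKcomm : ∀ n m : ℕ, ∀ x ∈ Kf n, ∀ y ∈ Kf m, x * y * x⁻¹ * y⁻¹ ∈ Kf (n + m))
    (W : ℕ → Submodule K M) (hWdesc : ∀ k, W (k + 1) ≤ W k)
    (hact : ∀ n : ℕ, ∀ g ∈ Kf n, ∀ k, ∀ v ∈ W k, gbr ρ g v ∈ W (k + n))
    (n n' : ℕ) (hn : 1 ≤ n) (hn' : 1 ≤ n')
    (g : G) (hg : g ∈ Kf n) (h : G) (hh : h ∈ Kf n')
    (k : ℕ) (v : M) (hv : v ∈ W k) :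
    gbr ρ (g * h * g⁻¹ * h⁻¹) v - (gbr ρ g (gbr ρ h v) - gbr ρ h (gbr ρ g v))
      ∈ W (k + n + n' + 1) := by
  have hW : Antitone W := antitone_nat_of_succ_le hWdesc
  have hhg : gbr ρ (h * g) v ∈ W (k + 1) :=
    gbr_mul_mem ρ (fun x hx => hW (by omega) (hact n' h hh _ x hx))
      (hW (by omega) (hact n' h hh k v hv)) (hW (by omega) (hact n g hg k v hv))
  rw [gbr_commutator_sub_eq, show k + n + n' + 1 = k + 1 + (n + n') by omega]
  exact neg_mem (hact _ _ (hKcomm n n' g hg h hh) _ _ hhg)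

/-- Let `K_* = (K_n)` be an extended N-series of a group `G` acting on a filtered vector space
`W = W_0 ⊇ W_1 ⊇ ⋯` (so `g ∈ K_n` satisfies `[g, W_k] ⊆ W_{k+n}`).  Then the induced maps
`ρ_+ : K_n/K_{n+1} → Hom(W_k/W_{k+1}, W_{k+n}/W_{k+n+1})`, `[g] ↦ ([v] ↦ [[g,v]])`, turn the
group commutator into the commutator of linear maps: at the level of representatives, for
`g ∈ K_n`, `h ∈ K_n'` and `v ∈ W_k`,
`[[g,h], v] ≡ [g,[h,v]] − [h,[g,v]]  (mod W_{k+n+n'+1})`. -/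
theorem stmt7 {K M G : Type*} [Field K] [CharZero K] [AddCommGroup M] [Module K M] [Group G]
    (ρ : G →* (M ≃ₗ[K] M))
    (Kf : ℕ → Subgroup G) (hK0 : Kf 0 = ⊤) (hKdesc : ∀ n, Kf (n + 1) ≤ Kf n)
    (hKcomm : ∀ n m : ℕ, ∀ x ∈ Kf n, ∀ y ∈ Kf m, x * y * x⁻¹ * y⁻¹ ∈ Kf (n + m))
    (W : ℕ → Submodule K M) (hWdesc : ∀ k, W (k + 1) ≤ W k)
    (hact : ∀ n : ℕ, ∀ g ∈ Kf n, ∀ k, ∀ v ∈ W k, gbr ρ g v ∈ W (k + n))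
    (n n' : ℕ) (hn : 1 ≤ n) (hn' : 1 ≤ n')
    (g : G) (hg : g ∈ Kf n) (h : G) (hh : h ∈ Kf n')
    (k : ℕ) (v : M) (hv : v ∈ W k) :
    gbr ρ (g * h * g⁻¹ * h⁻¹) v - (gbr ρ g (gbr ρ h v) - gbr ρ h (gbr ρ g v))
      ∈ W (k + n + n' + 1) :=
  stmt7_general ρ Kf hKcomm W hWdesc hact n n' hn hn' g hg h hh k v hv
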